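/- arXiv:2406.05376 — 5 statements merged into one kernel-verified Lean document; each statement's English description precedes it below -/
import Mathlib

section
/- Chain rule along curves: Let X be a Banach space, E : X → (-∞,∞] a functional with Fréchet subdifferential ∂E, and u : [0,T] → dom(E) a curve. If at a point t ∈ (0,T) both u and E∘u are differentiable and ∂E(u(t)) ≠ ∅, then d/dt E(u(t)) = ⟨ξ, u'(t)⟩ for every ξ ∈ ∂E(u(t)). -/
open Filter Topology

/-- The Fréchet subdifferential of `E : X → (-∞,∞]` at `x`:
`ξ ∈ ∂E(x)` iff `liminf_{z→x} (E(z) - E(x) - ⟨ξ, z-x⟩)/‖z-x‖ ≥ 0`. -/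
def FrechetSubdiff {X : Type*} [NormedAddCommGroup X] [NormedSpace ℝ X]
    (E : X → EReal) (x : X) : Set (StrongDual ℝ X) :=
  {ξ | (0 : EReal) ≤
    Filter.liminf (fun z => (E z - E x - ((ξ (z - x) : ℝ) : EReal)) / ((‖z - x‖ : ℝ) : EReal))
      (𝓝[≠] x)}

/-- **chain rule along curves.** If `u : [0,T] → dom E` and at `t ∈ (0,T)` both
`u` and `E ∘ u` are differentiable and the Fréchet subdifferential of `E` at `u t` is
nonempty, then `(E ∘ u)'(t) = ⟨ξ, u'(t)⟩` for every `ξ ∈ ∂E(u(t))`. -/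
theorem chain_rule_along_curve {X : Type*} [NormedAddCommGroup X] [NormedSpace ℝ X]
    (E : X → EReal) (hbot : ∀ z, E z ≠ ⊥)
    (T : ℝ) (u : ℝ → X)
    (hdom : ∀ s ∈ Set.Icc (0 : ℝ) T, E (u s) ≠ ⊤)
    (t : ℝ) (ht : t ∈ Set.Ioo (0 : ℝ) T)
    (v : X) (hu : HasDerivAt u v t)
    (e : ℝ) (hE : HasDerivAt (fun s => (E (u s)).toReal) e t) :
    ∀ ξ ∈ FrechetSubdiff E (u t), e = ξ v := by
  intro ξ hξ
  rw [FrechetSubdiff, Set.mem_setOf_eq] at hξ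
  -- the auxiliary function
  set f : ℝ → ℝ := fun s => (E (u s)).toReal with hf
  have hg : HasDerivAt (fun s => ξ (u s - u t)) (ξ v) t :=
    (ξ.hasFDerivAt.comp_hasDerivAt t (hu.sub_const (u t)))
  set h : ℝ → ℝ := fun s => f s - f t - ξ (u s - u t) with hh
  have hht : h t = 0 := by simp [hh]
  set c : ℝ := e - ξ v with hc
  have hhd : HasDerivAt h c t := (hE.sub_const (f t)).sub hg
  have hslope : Tendsto (fun s => h s / (s - t)) (𝓝[≠] t) (𝓝 c) := by
    have h1 := hasDerivAt_iff_tendsto_slope.1 hhd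
    refine h1.congr fun s => ?_
    simp [slope_def_field, hht]
  -- Lipschitz-type bound
  obtain ⟨C, hC⟩ := (hu.isBigO_sub).bound
  set C' : ℝ := max C 1 with hC'
  have hC'pos : 0 < C' := lt_of_lt_of_le one_pos (le_max_right _ _)
  have hCbd : ∀ᶠ s in 𝓝 t, ‖u s - u t‖ ≤ C' * |s - t| := by
    filter_upwards [hC] with s hs
    calc ‖u s - u t‖ ≤ C * ‖s - t‖ := hs
    _ ≤ C' * |s - t| := by
        rw [Real.norm_eq_abs]
        exact mul_le_mul_of_nonneg_right (le_max_left _ _) (abs_nonneg _)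
  -- key claim
  have key : ∀ ε : ℝ, 0 < ε → ∀ᶠ s in 𝓝 t, -(ε * C') * |s - t| ≤ h s := by
    intro ε hε
    have hlt : ∀ᶠ z in 𝓝[≠] (u t), ((-ε : ℝ) : EReal) <
        (E z - E (u t) - ((ξ (z - u t) : ℝ) : EReal)) / ((‖z - u t‖ : ℝ) : EReal) := by
      refine eventually_lt_of_lt_liminf
        (lt_of_lt_of_le (by exact_mod_cast neg_neg_of_pos hε : ((-ε:ℝ):EReal) < 0) hξ)
        (Filter.isBoundedUnder_of ⟨⊥, fun _ => bot_le⟩)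
    rw [eventually_nhdsWithin_iff] at hlt
    have hcont : Tendsto u (𝓝 t) (𝓝 (u t)) := hu.continuousAt
    have hIoo : ∀ᶠ s in 𝓝 t, s ∈ Set.Ioo (0:ℝ) T := Ioo_mem_nhds ht.1 ht.2
    filter_upwards [hcont.eventually hlt, hIoo, hCbd] with s hs hsI hsC
    have hfin : E (u s) ≠ ⊤ := hdom s (Set.mem_Icc_of_Ioo hsI)
    have hfint : E (u t) ≠ ⊤ := hdom t (Set.mem_Icc_of_Ioo ht)
    rcases eq_or_ne (u s) (u t) with heq | hne
    · have : h s = 0 := by simp [hh, hf, heq]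
      rw [this]
      have : (0:ℝ) ≤ ε * C' * |s - t| := by positivity
      linarith
    · have hs' := hs hne
      have hnorm : (0:ℝ) < ‖u s - u t‖ := by
        rw [norm_pos_iff, sub_ne_zero]; exact hne
      -- convert EReal inequality to real
      have hEs : E (u s) = ((f s : ℝ) : EReal) := (EReal.coe_toReal hfin (hbot _)).symm
      have hEt : E (u t) = ((f t : ℝ) : EReal) := (EReal.coe_toReal hfint (hbot _)).symm
      rw [hEs, hEt, ← EReal.coe_sub, ← EReal.coe_sub, ← EReal.coe_div,
        EReal.coe_lt_coe_iff] at hs'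
      have hreal : -ε * ‖u s - u t‖ < h s := (lt_div_iff₀ hnorm).1 hs'
      have : -(ε * C') * |s - t| ≤ -ε * ‖u s - u t‖ := by
        have := mul_le_mul_of_nonneg_left hsC (le_of_lt hε)
        nlinarith
      linarith
  -- conclude |c| ≤ ε * C' for all ε > 0
  have habs : ∀ ε : ℝ, 0 < ε → |c| ≤ ε * C' := by
    intro ε hε
    obtain ⟨hr, hl⟩ : c ∈ Set.Icc (-(ε * C')) (ε * C') := by
      constructor
      · -- from the right
        have hmem : ∀ᶠ s in 𝓝[>] t, -(ε * C') ≤ h s / (s - t) := by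
          filter_upwards [(key ε hε).filter_mono nhdsWithin_le_nhds,
            self_mem_nhdsWithin] with s hs hst
          have hpos : (0:ℝ) < s - t := sub_pos.2 hst
          rw [le_div_iff₀ hpos]
          calc -(ε * C') * (s - t) = -(ε * C') * |s - t| := by
                rw [abs_of_pos hpos]
          _ ≤ h s := hs
        have hR : 𝓝[>] t ≤ 𝓝[≠] t := nhdsWithin_mono _ fun x hx => ne_of_gt hx
        exact ge_of_tendsto (hslope.mono_left hR) hmem
      · -- from the left
        have hmem : ∀ᶠ s in 𝓝[<] t, h s / (s - t) ≤ ε * C' := by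
          filter_upwards [(key ε hε).filter_mono nhdsWithin_le_nhds,
            self_mem_nhdsWithin] with s hs hst
          have hneg : s - t < 0 := sub_neg.2 hst
          rw [div_le_iff_of_neg hneg]
          calc (ε * C') * (s - t) = -(ε * C') * |s - t| := by
                rw [abs_of_neg hneg]; ring
          _ ≤ h s := hs
        have hL : 𝓝[<] t ≤ 𝓝[≠] t := nhdsWithin_mono _ fun x hx => ne_of_lt hx
        exact le_of_tendsto (hslope.mono_left hL) hmem
    exact abs_le.2 ⟨hr, hl⟩
  have : |c| ≤ 0 := by
    refine le_of_forall_pos_le_add ?_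
    intro δ hδ
    have := habs (δ / C') (div_pos hδ hC'pos)
    rw [div_mul_cancel₀ _ (ne_of_gt hC'pos)] at this
    linarith
  have : c = 0 := abs_nonpos_iff.1 this
  exact sub_eq_zero.1 this
end

section
/- Let E = E^c + E^d on a Banach space X, with E^c proper convex lower semicontinuous and E^d ∈ C¹ with D E^d Lipschitz of constant L. Define the semi-linearization E^{sl}(x; z) := E^d(z) + ⟨D E^d(z), x - z⟩ + E^c(x). Then for all x, z ∈ X, the local slopes satisfy | |∂E|(x) - |∂E^{sl}(·;z)|(x) | ≤ L ‖z - x‖. -/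
open Filter Topology

/-- The local (metric) slope `|∂F|(x) = limsup_{z→x} (F(x)-F(z))⁺ / ‖x-z‖`. -/
noncomputable def localSlope {X : Type*} [NormedAddCommGroup X] (F : X → EReal) (x : X) : EReal :=
  Filter.limsup (fun z => max (F x - F z) 0 / ((dist x z : ℝ) : EReal)) (𝓝[≠] x)

private lemma coe_max0 (r : ℝ) : max ((r : ℝ) : EReal) 0 = ((max r 0 : ℝ) : EReal) := by
  rcases le_total r 0 with h | h
  · rw [max_eq_right (EReal.coe_nonpos.mpr h), max_eq_right h, EReal.coe_zero]
  · rw [max_eq_left (EReal.coe_nonneg.mpr h), max_eq_left h]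

/-- Mean value estimate for the linearization error. -/
private lemma mvt_bound {X : Type*} [NormedAddCommGroup X] [NormedSpace ℝ X]
    (Ed : X → ℝ) (Ed' : X → StrongDual ℝ X)
    (hdiff : ∀ x, HasFDerivAt Ed (Ed' x) x)
    (L : NNReal) (hLip : LipschitzWith L Ed') (x y z : X) :
    |Ed x - Ed y - Ed' z (x - y)| ≤ ((L : ℝ) * (‖z - x‖ + dist x y)) * dist x y := by
  set f : X → ℝ := fun w => Ed w - Ed' z w with hf
  set C : ℝ := (L : ℝ) * (‖z - x‖ + dist x y) with hCdef
  have hbound : ∀ w ∈ Metric.closedBall x (dist x y),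
      ‖(Ed' w : X →L[ℝ] ℝ) - (Ed' z : X →L[ℝ] ℝ)‖ ≤ C := by
    intro w hw
    have h1 : ‖(Ed' w : X →L[ℝ] ℝ) - (Ed' z : X →L[ℝ] ℝ)‖ ≤ (L : ℝ) * ‖w - z‖ := by
      have := hLip.dist_le_mul w z
      rwa [dist_eq_norm, dist_eq_norm] at this
    refine h1.trans ?_
    have h3 : ‖w - x‖ ≤ dist x y := by
      have := Metric.mem_closedBall.mp hw
      rwa [dist_eq_norm] at this
    have h2 : ‖w - z‖ ≤ ‖z - x‖ + dist x y := by
      calc ‖w - z‖ = ‖(w - x) + (x - z)‖ := by rw [sub_add_sub_cancel]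
        _ ≤ ‖w - x‖ + ‖x - z‖ := norm_add_le _ _
        _ = ‖w - x‖ + ‖z - x‖ := by rw [norm_sub_rev x z]
        _ ≤ ‖z - x‖ + dist x y := by linarith
    exact mul_le_mul_of_nonneg_left h2 (NNReal.coe_nonneg L)
  have key : ‖f y - f x‖ ≤ C * ‖y - x‖ :=
    (convex_closedBall x (dist x y)).norm_image_sub_le_of_norm_hasFDerivWithin_le
      (fun w _ => ((hdiff w).sub ((Ed' z).hasFDerivAt)).hasFDerivWithinAt)
      hbound (Metric.mem_closedBall_self dist_nonneg)
      (by simpa [Metric.mem_closedBall, dist_comm] using le_refl (dist x y))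
  have hfy : f y - f x = -(Ed x - Ed y - Ed' z (x - y)) := by
    simp only [hf, map_sub]; ring
  rw [hfy, Real.norm_eq_abs, abs_neg] at key
  calc |Ed x - Ed y - Ed' z (x - y)| ≤ C * ‖y - x‖ := key
    _ = C * dist x y := by rw [← dist_eq_norm, dist_comm]

/-- Pointwise quotient estimate. -/
private lemma quot_bound {X : Type*} [NormedAddCommGroup X]
    (Ec : X → EReal) (hbot : ∀ w, Ec w ≠ ⊥) (u v : X → ℝ) (x y : X)
    (hxy : y ≠ x) (C : ℝ) (hC : |(u x - u y) - (v x - v y)| ≤ C * dist x y) :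
    max ((Ec x + (u x : EReal)) - (Ec y + (u y : EReal))) 0 / ((dist x y : ℝ) : EReal) ≤
    max ((Ec x + (v x : EReal)) - (Ec y + (v y : EReal))) 0 / ((dist x y : ℝ) : EReal)
      + (C : EReal) := by
  have hd : (0 : ℝ) < dist x y := dist_pos.mpr (Ne.symm hxy)
  have hC0 : 0 ≤ C := by nlinarith [abs_nonneg ((u x - u y) - (v x - v y))]
  by_cases hx : Ec x = ⊤
  · by_cases hy : Ec y = ⊤
    · simp only [hx, hy, EReal.top_add_coe]
      have h0 : (⊤ : EReal) - ⊤ = ⊥ := rfl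
      rw [h0, max_eq_right bot_le, EReal.zero_div, zero_add]
      exact EReal.coe_nonneg.mpr hC0
    · lift Ec y to ℝ using ⟨hy, hbot y⟩ with q hq
      simp only [hx, EReal.top_add_coe, ← EReal.coe_add]
      rw [EReal.top_sub_coe (q + u y), EReal.top_sub_coe (q + v y),
        max_eq_left le_top,
        EReal.top_div_of_pos_ne_top (by exact_mod_cast hd) (EReal.coe_ne_top _),
        EReal.top_add_coe]
  · lift Ec x to ℝ using ⟨hx, hbot x⟩ with p hp
    by_cases hy : Ec y = ⊤
    · simp only [hy, EReal.top_add_coe, ← EReal.coe_add]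
      have h1 : ((p + u x : ℝ) : EReal) - ⊤ = ⊥ := rfl
      have h2 : ((p + v x : ℝ) : EReal) - ⊤ = ⊥ := rfl
      rw [h1, h2, max_eq_right bot_le, EReal.zero_div, zero_add]
      exact EReal.coe_nonneg.mpr hC0
    · lift Ec y to ℝ using ⟨hy, hbot y⟩ with q hq
      rw [← EReal.coe_add, ← EReal.coe_add, ← EReal.coe_add, ← EReal.coe_add,
        ← EReal.coe_sub, ← EReal.coe_sub, coe_max0, coe_max0,
        ← EReal.coe_div, ← EReal.coe_div, ← EReal.coe_add, EReal.coe_le_coe_iff]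
      set s : ℝ := p + v x - (q + v y) with hs
      set a : ℝ := (u x - u y) - (v x - v y) with ha
      have hnum : p + u x - (q + u y) = s + a := by rw [hs, ha]; ring
      rw [hnum]
      have hmax : max (s + a) 0 ≤ max s 0 + C * dist x y := by
        rcases abs_le.mp hC with ⟨h1, h2⟩
        refine max_le ?_ ?_
        · have : s ≤ max s 0 := le_max_left _ _
          linarith
        · have : (0:ℝ) ≤ max s 0 := le_max_right _ _
          nlinarith
      calc max (s + a) 0 / dist x y ≤ (max s 0 + C * dist x y) / dist x y := by
            gcongr
        _ = max s 0 / dist x y + C := by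
            rw [add_div, mul_div_assoc, div_self hd.ne', mul_one]

/-- One-sided slope comparison. -/
private lemma slope_le {X : Type*} [NormedAddCommGroup X] [NormedSpace ℝ X]
    (Ec : X → EReal) (hbot : ∀ w, Ec w ≠ ⊥) (u v : X → ℝ) (x : X) (c K : ℝ)
    (hc : 0 ≤ c)
    (hpt : ∀ y, y ≠ x → |(u x - u y) - (v x - v y)| ≤ (c + K * dist x y) * dist x y)
    (hK : 0 ≤ K) :
    localSlope (fun y => Ec y + (u y : EReal)) x ≤
      localSlope (fun y => Ec y + (v y : EReal)) x + (c : EReal) := by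
  by_cases hne : (𝓝[≠] x).NeBot
  · set φ : X → EReal := fun y => ((c + K * dist x y : ℝ) : EReal) with hφ
    have step1 : localSlope (fun y => Ec y + (u y : EReal)) x ≤
        limsup (fun y => max ((Ec x + (v x : EReal)) - (Ec y + (v y : EReal))) 0 /
          ((dist x y : ℝ) : EReal) + φ y) (𝓝[≠] x) := by
      refine limsup_le_limsup ?_ Filter.isCobounded_le_of_bot Filter.isBounded_le_of_top
      filter_upwards [self_mem_nhdsWithin] with y hy
      exact quot_bound Ec hbot u v x y hy _ (hpt y hy)
    have hφlim : limsup φ (𝓝[≠] x) = ((c : ℝ) : EReal) := by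
      have h1 : Tendsto (fun y : X => c + K * dist x y) (𝓝 x) (𝓝 (c + K * dist x x)) :=
        (continuous_const.add (continuous_const.mul
          (continuous_const.dist continuous_id))).tendsto x
      simp only [dist_self, mul_zero, add_zero] at h1
      exact (EReal.tendsto_coe.mpr (h1.mono_left nhdsWithin_le_nhds)).limsup_eq
    have step2 : limsup (fun y => max ((Ec x + (v x : EReal)) - (Ec y + (v y : EReal))) 0 /
          ((dist x y : ℝ) : EReal) + φ y) (𝓝[≠] x) ≤
        localSlope (fun y => Ec y + (v y : EReal)) x + (c : EReal) := by
      have h2 := EReal.limsup_add_le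
        (u := fun y => max ((Ec x + (v x : EReal)) - (Ec y + (v y : EReal))) 0 /
          ((dist x y : ℝ) : EReal)) (v := φ) (f := 𝓝[≠] x)
        (Or.inr (by rw [hφlim]; exact EReal.coe_ne_top c))
        (Or.inr (by rw [hφlim]; exact EReal.coe_ne_bot c))
      rw [hφlim] at h2
      exact h2
    exact step1.trans step2
  · rw [not_neBot] at hne
    unfold localSlope
    rw [hne, limsup_bot]
    exact bot_le

/-- For `E = E^c + E^d` with `E^c` proper convex lsc and `E^d` `C¹` with
`L`-Lipschitz derivative, the local slopes of `E` and of its semi-linearization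
`E^{sl}(·;z) = E^d(z) + ⟨DE^d(z), · - z⟩ + E^c(·)` differ at `x` by at most `L‖z - x‖`. -/
theorem slope_semilinearization_estimate {X : Type*} [NormedAddCommGroup X] [NormedSpace ℝ X]
    [CompleteSpace X]
    (Ec : X → EReal) (Ed : X → ℝ) (Ed' : X → StrongDual ℝ X)
    (hbot : ∀ z, Ec z ≠ ⊥) (hproper : ∃ z, Ec z ≠ ⊤)
    (hconv : ∀ (a b : ℝ) (y z : X), 0 ≤ a → 0 ≤ b → a + b = 1 →
      Ec (a • y + b • z) ≤ (a : EReal) * Ec y + (b : EReal) * Ec z)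
    (hlsc : LowerSemicontinuous Ec)
    (hdiff : ∀ x, HasFDerivAt Ed (Ed' x) x)
    (L : NNReal) (hLip : LipschitzWith L Ed')
    (x z : X) :
    localSlope (fun y => Ec y + (Ed y : EReal)) x ≤
        localSlope (fun y => ((Ed z + Ed' z (y - z) : ℝ) : EReal) + Ec y) x +
          (((L : ℝ) * ‖z - x‖ : ℝ) : EReal) ∧
      localSlope (fun y => ((Ed z + Ed' z (y - z) : ℝ) : EReal) + Ec y) x ≤
        localSlope (fun y => Ec y + (Ed y : EReal)) x + (((L : ℝ) * ‖z - x‖ : ℝ) : EReal) := by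
  have hG : (fun y => ((Ed z + Ed' z (y - z) : ℝ) : EReal) + Ec y)
      = (fun y => Ec y + ((Ed z + Ed' z (y - z) : ℝ) : EReal)) :=
    funext fun y => add_comm _ _
  set v : X → ℝ := fun y => Ed z + Ed' z (y - z) with hv
  have hlin : ∀ y : X, (Ed x - Ed y) - (v x - v y) = Ed x - Ed y - Ed' z (x - y) := by
    intro y
    simp only [hv, map_sub]
    ring
  have hc0 : 0 ≤ (L : ℝ) * ‖z - x‖ := mul_nonneg (NNReal.coe_nonneg L) (norm_nonneg _)
  have hbound : ∀ y : X, y ≠ x →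
      |(Ed x - Ed y) - (v x - v y)| ≤ ((L : ℝ) * ‖z - x‖ + (L : ℝ) * dist x y) * dist x y := by
    intro y _
    rw [hlin y]
    calc |Ed x - Ed y - Ed' z (x - y)| ≤ ((L : ℝ) * (‖z - x‖ + dist x y)) * dist x y :=
          mvt_bound Ed Ed' hdiff L hLip x y z
      _ = ((L : ℝ) * ‖z - x‖ + (L : ℝ) * dist x y) * dist x y := by ring
  rw [hG]
  constructor
  · exact slope_le Ec hbot Ed v x _ _ hc0 hbound (NNReal.coe_nonneg L)
  · refine slope_le Ec hbot v Ed x _ _ hc0 (fun y hy => ?_) (NNReal.coe_nonneg L)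
    rw [abs_sub_comm]
    exact hbound y hy
end

section
/- Projection-minimization commutation for the ℓ^∞ ball: Let x⁰ ∈ ℝ^d, ε, τ > 0, x ∈ B̄_ε^∞(x⁰), and ξ ∈ ℝ^d. Define Clip_{x⁰,ε}(z)_j := x⁰_j + max(min(z_j - x⁰_j, ε), -ε). Then Clip_{x⁰,ε}(x - τ sign(ξ)) is a minimizer of z ↦ ⟨ξ, z⟩ over the intersection B̄_τ^∞(x) ∩ B̄_ε^∞(x⁰), i.e., first taking a signed-gradient step of size τ and then clipping to the budget ball attains the minimum of the linear objective over the intersection of the two ℓ^∞ balls. -/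
open Filter Topology

/-- Componentwise clipping to the `ℓ^∞` ball of radius `ε` around `x⁰`. -/
def clip {d : ℕ} (x0 : Fin d → ℝ) (ε : ℝ) (z : Fin d → ℝ) : Fin d → ℝ :=
  fun j => x0 j + max (min (z j - x0 j) ε) (-ε)

/-- **projection–minimization commutation for the `ℓ^∞` ball.**
For `x ∈ B̄_ε^∞(x⁰)` and any `ξ`, the point obtained by a signed step of size `τ` followed by
clipping to the budget ball minimizes `z ↦ ⟨ξ, z⟩` over `B̄_τ^∞(x) ∩ B̄_ε^∞(x⁰)`.
(The norm on `Fin d → ℝ` is the sup norm.) -/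
theorem clip_signed_step_minimizes {d : ℕ} (x0 x ξ : Fin d → ℝ) (ε τ : ℝ)
    (hε : 0 < ε) (hτ : 0 < τ) (hx : ‖x - x0‖ ≤ ε) :
    let y := clip x0 ε (fun j => x j - τ * Real.sign (ξ j))
    ‖y - x‖ ≤ τ ∧ ‖y - x0‖ ≤ ε ∧
      ∀ z : Fin d → ℝ, ‖z - x‖ ≤ τ → ‖z - x0‖ ≤ ε →
        (∑ j, ξ j * y j) ≤ ∑ j, ξ j * z j := by
  intro y
  have hxj : ∀ j, |x j - x0 j| ≤ ε := fun j => by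
    have h1 := norm_le_pi_norm (x - x0) j
    simpa [Real.norm_eq_abs] using h1.trans hx
  have hts : ∀ j, -τ ≤ τ * Real.sign (ξ j) ∧ τ * Real.sign (ξ j) ≤ τ := fun j => by
    rcases lt_trichotomy (ξ j) 0 with h | h | h
    · rw [Real.sign_of_neg h]; constructor <;> linarith
    · simp [h, hτ.le]
    · rw [Real.sign_of_pos h]; constructor <;> linarith
  have hyx : ∀ j, |y j - x j| ≤ τ := fun j => by
    obtain ⟨hs1, hs2⟩ := hts j
    obtain ⟨hb1, hb2⟩ := abs_le.mp (hxj j)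
    simp only [y, clip]
    rw [abs_le]
    constructor
    · rcases le_total (x j - τ * Real.sign (ξ j) - x0 j) ε with h | h
      · rw [min_eq_left h]
        rcases le_total (x j - τ * Real.sign (ξ j) - x0 j) (-ε) with h' | h'
        · rw [max_eq_right h']; linarith
        · rw [max_eq_left h']; linarith
      · rw [min_eq_right h, max_eq_left (by linarith : -ε ≤ ε)]; linarith
    · rcases le_total (x j - τ * Real.sign (ξ j) - x0 j) ε with h | h
      · rw [min_eq_left h]
        rcases le_total (x j - τ * Real.sign (ξ j) - x0 j) (-ε) with h' | h'
        · rw [max_eq_right h']; linarith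
        · rw [max_eq_left h']; linarith
      · rw [min_eq_right h, max_eq_left (by linarith : -ε ≤ ε)]; linarith
  have hyx0 : ∀ j, |y j - x0 j| ≤ ε := fun j => by
    simp only [y, clip]
    rw [abs_le]
    constructor
    · have : -ε ≤ max (min (x j - τ * Real.sign (ξ j) - x0 j) ε) (-ε) := le_max_right _ _
      linarith
    · have : max (min (x j - τ * Real.sign (ξ j) - x0 j) ε) (-ε) ≤ ε :=
        max_le (min_le_right _ _) (by linarith)
      linarith
  refine ⟨?_, ?_, ?_⟩
  · exact (pi_norm_le_iff_of_nonneg hτ.le).mpr fun j => by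
      simpa [Real.norm_eq_abs] using hyx j
  · exact (pi_norm_le_iff_of_nonneg hε.le).mpr fun j => by
      simpa [Real.norm_eq_abs] using hyx0 j
  · intro z hz1 hz2
    apply Finset.sum_le_sum
    intro j _
    have hz1j : |z j - x j| ≤ τ := by
      have h1 := norm_le_pi_norm (z - x) j
      simpa [Real.norm_eq_abs] using h1.trans hz1
    have hz2j : |z j - x0 j| ≤ ε := by
      have h1 := norm_le_pi_norm (z - x0) j
      simpa [Real.norm_eq_abs] using h1.trans hz2
    obtain ⟨ha1, ha2⟩ := abs_le.mp hz1j
    obtain ⟨hc1, hc2⟩ := abs_le.mp hz2j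
    obtain ⟨hb1, hb2⟩ := abs_le.mp (hxj j)
    rcases lt_trichotomy (ξ j) 0 with h | h | h
    · -- sign = -1 ; y j = min (x j + τ) (x0 j + ε), need z j ≤ y j
      have hyj : y j = min (x j + τ) (x0 j + ε) := by
        simp only [y, clip, Real.sign_of_neg h]
        rw [max_eq_left (le_min (by linarith) (by linarith) :
          (-ε : ℝ) ≤ min (x j - τ * (-1) - x0 j) ε)]
        rcases le_total (x j - τ * (-1) - x0 j) ε with h' | h'
        · rw [min_eq_left h', min_eq_left (by linarith)]; ring
        · rw [min_eq_right h', min_eq_right (by linarith)]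
      have hzy : z j ≤ y j := by rw [hyj]; exact le_min (by linarith) (by linarith)
      nlinarith
    · simp [h]
    · -- sign = 1 ; y j = max (x j - τ) (x0 j - ε), need y j ≤ z j
      have hyj : y j = max (x j - τ) (x0 j - ε) := by
        simp only [y, clip, Real.sign_of_pos h]
        rw [min_eq_left (by linarith : x j - τ * 1 - x0 j ≤ ε)]
        rcases le_total (x j - τ * 1 - x0 j) (-ε) with h' | h'
        · rw [max_eq_right h', max_eq_right (by linarith)]; ring
        · rw [max_eq_left h', max_eq_left (by linarith)]; ring
      have hzy : y j ≤ z j := by rw [hyj]; exact max_le (by linarith) (by linarith)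
      nlinarith
end

section
/- Dissipation via strong upper gradient: Let (S,d) be a metric space, E : S → (-∞,∞] proper, g a strong upper gradient of E, and u : [0,T] → S an absolutely continuous curve with metric derivative |u'| ≤ 1 a.e. Suppose E∘u agrees a.e. with a finite non-increasing map ψ satisfying ψ'(t) ≤ -g(u(t)) for a.e. t. Then E∘u is absolutely continuous on (0,T) and the energy dissipation equality E(u(s)) - E(u(t)) = ∫_s^t g(u(r)) dr holds for all 0 ≤ s ≤ t ≤ T. -/
open Filter Topology MeasureTheory
open scoped ENNReal

variable {S : Type*} [MetricSpace S]

/-- The curve `u` has metric derivative `m` at `t`. -/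
def HasMetricDerivAt (u : ℝ → S) (t : ℝ) (m : ℝ) : Prop :=
  Filter.Tendsto (fun s => dist (u s) (u t) / |s - t|) (𝓝[≠] t) (𝓝 m)

/-- `u` is absolutely continuous on `[a,b]`: there is an integrable `m` dominating all
distances via `d(u(s),u(t)) ≤ ∫_s^t m`. -/
def IsACOn (u : ℝ → S) (a b : ℝ) : Prop :=
  ∃ m : ℝ → ℝ, IntegrableOn m (Set.Icc a b) volume ∧
    ∀ s t : ℝ, a ≤ s → s ≤ t → t ≤ b → dist (u s) (u t) ≤ ∫ r in s..t, m r

/-- `g : S → [0,∞]` is a strong upper gradient for `E`: along every absolutely continuous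
curve, `g ∘ u` is (a.e.-)measurable and `|E(u(t)) - E(u(s))| ≤ ∫_s^t g(u(r))|u'|(r) dr`. -/
def IsStrongUpperGradient (g : S → ℝ≥0∞) (E : S → EReal) : Prop :=
  ∀ (u : ℝ → S) (a b : ℝ), IsACOn u a b →
    AEMeasurable (fun t => g (u t)) (volume.restrict (Set.Icc a b)) ∧
    ∀ md : ℝ → ℝ,
      (∀ᵐ t ∂(volume.restrict (Set.Icc a b)), HasMetricDerivAt u t (md t)) →
      ∀ s t : ℝ, a ≤ s → s ≤ t → t ≤ b →
        (E (u t) - E (u s) ≤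
          ((∫⁻ r in Set.Icc s t, g (u r) * ENNReal.ofReal (md r) : ℝ≥0∞) : EReal)) ∧
        (E (u s) - E (u t) ≤
          ((∫⁻ r in Set.Icc s t, g (u r) * ENNReal.ofReal (md r) : ℝ≥0∞) : EReal))

section Aux

open Set Function

lemma antitone_lintegral_neg_deriv_le {ψ ψd : ℝ → ℝ} {a b : ℝ} (hab : a ≤ b)
    (hmono : AntitoneOn ψ (Set.Icc a b))
    (hd : ∀ᵐ t ∂(volume.restrict (Set.Icc a b)), HasDerivAt ψ (ψd t) t) :
    ∫⁻ t in Set.Icc a b, ENNReal.ofReal (-ψd t) ≤ ENNReal.ofReal (ψ a - ψ b) := by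
  set φ : ℝ → ℝ := fun t => -ψ (max a (min t b)) with hφdef
  have hclamp : ∀ t, max a (min t b) ∈ Set.Icc a b := fun t =>
    ⟨le_max_left _ _, max_le hab (min_le_right _ _)⟩
  have hφ : Monotone φ := by
    intro x y hxy
    have : max a (min x b) ≤ max a (min y b) :=
      max_le_max le_rfl (min_le_min hxy le_rfl)
    exact neg_le_neg (hmono (hclamp x) (hclamp y) this)
  set μ := hφ.stieltjesFunction.measure with hμdef
  have key := hφ.ae_hasDerivAt
  have hlt := Measure.rnDeriv_lt_top μ volume
  -- a.e. on Ioo a b, ofReal (-ψd x) = rnDeriv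
  have hae : ∀ᵐ x ∂(volume.restrict (Set.Ioo a b)),
      ENNReal.ofReal (-ψd x) = μ.rnDeriv volume x := by
    have hd' : ∀ᵐ t ∂(volume.restrict (Set.Ioo a b)), HasDerivAt ψ (ψd t) t :=
      ae_restrict_of_ae_restrict_of_subset Set.Ioo_subset_Icc_self hd
    filter_upwards [hd', ae_restrict_of_ae key, ae_restrict_of_ae hlt,
      ae_restrict_mem measurableSet_Ioo] with x hdx hkx hltx hx
    have hev : φ =ᶠ[𝓝 x] fun t => -ψ t := by
      filter_upwards [Ioo_mem_nhds hx.1 hx.2] with y hy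
      simp [hφdef, min_eq_left hy.2.le, max_eq_right hy.1.le]
    have h1 : HasDerivAt (fun t => -ψ t) ((μ.rnDeriv volume x).toReal) x :=
      (hev.hasDerivAt_iff).1 hkx
    have h2 : HasDerivAt (fun t => -ψ t) (-ψd x) x := hdx.neg
    rw [h2.unique h1, ENNReal.ofReal_toReal hltx.ne]
  have hIcc : volume.restrict (Set.Ioo a b) = volume.restrict (Set.Icc a b) :=
    Measure.restrict_congr_set Ioo_ae_eq_Icc
  calc ∫⁻ t in Set.Icc a b, ENNReal.ofReal (-ψd t)
      = ∫⁻ t in Set.Ioo a b, ENNReal.ofReal (-ψd t) := by rw [hIcc]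
    _ = ∫⁻ t in Set.Ioo a b, μ.rnDeriv volume t := lintegral_congr_ae hae
    _ ≤ μ (Set.Ioo a b) := Measure.setLIntegral_rnDeriv_le _
    _ ≤ μ (Set.Icc a b) := measure_mono Set.Ioo_subset_Icc_self
    _ = ENNReal.ofReal (hφ.stieltjesFunction b - leftLim hφ.stieltjesFunction a) :=
        hφ.stieltjesFunction.measure_Icc a b
    _ = ENNReal.ofReal (ψ a - ψ b) := by
        have hFb : hφ.stieltjesFunction b = -ψ b := by
          rw [hφ.stieltjesFunction_eq]
          apply rightLim_eq_of_tendsto (α := ℝ)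
          have : ∀ᶠ y in 𝓝[>] b, φ y = -ψ b := by
            filter_upwards [self_mem_nhdsWithin] with y (hy : b < y)
            simp [hφdef, min_eq_right hy.le, max_eq_right hab]
          rw [tendsto_congr' this]
          exact tendsto_const_nhds
        have hFa : leftLim hφ.stieltjesFunction a = -ψ a := by
          apply leftLim_eq_of_tendsto (α := ℝ)
          have : ∀ᶠ y in 𝓝[<] a, hφ.stieltjesFunction y = -ψ a := by
            filter_upwards [self_mem_nhdsWithin] with y (hy : y < a)
            rw [hφ.stieltjesFunction_eq]
            apply rightLim_eq_of_tendsto (α := ℝ)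
            have : ∀ᶠ z in 𝓝[>] y, φ z = -ψ a := by
              filter_upwards [Ioo_mem_nhdsGT_of_mem ⟨le_rfl, hy⟩] with z hz
              simp [hφdef, min_eq_left (hz.2.le.trans hab), max_eq_left hz.2.le]
            rw [tendsto_congr' this]
            exact tendsto_const_nhds
          rw [tendsto_congr' this]
          exact tendsto_const_nhds
        rw [hFb, hFa]
        ring_nf

lemma small_lintegral_near {f : ℝ → ℝ≥0∞} {T : ℝ}
    (hmeas : AEMeasurable f (volume.restrict (Set.Icc 0 T)))
    (hfin : (∫⁻ r in Set.Icc 0 T, f r) ≠ ⊤) (c : ℝ) {ε : ℝ≥0∞} (hε : ε ≠ 0) :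
    ∃ δ > (0:ℝ), ∫⁻ r in Set.Icc (c - δ) (c + δ) ∩ Set.Icc 0 T, f r < ε := by
  obtain ⟨f', hf'meas, hff'⟩ := hmeas
  set ν := volume.restrict (Set.Icc 0 T) with hν
  set μ := ν.withDensity f' with hμ
  have hμuniv : μ Set.univ ≠ ⊤ := by
    rw [hμ, withDensity_apply _ MeasurableSet.univ, Measure.restrict_univ]
    rw [← lintegral_congr_ae hff']
    exact hfin
  set A : ℕ → Set ℝ := fun n => Set.Icc (c - 1/(n+1)) (c + 1/(n+1)) ∩ Set.Icc 0 T with hA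
  have hAmeas : ∀ n, MeasurableSet (A n) := fun n => measurableSet_Icc.inter measurableSet_Icc
  have hanti : Antitone A := by
    intro n m hnm
    have h1 : (1:ℝ)/(m+1) ≤ 1/(n+1) := by
      apply one_div_le_one_div_of_le (by positivity)
      exact_mod_cast add_le_add_left (Nat.cast_le.2 hnm) 1
    exact Set.inter_subset_inter (Set.Icc_subset_Icc (by linarith) (by linarith)) Set.Subset.rfl
  have hInter : μ (⋂ n, A n) = 0 := by
    have hsub : (⋂ n, A n) ⊆ {c} := by
      intro x hx
      simp only [Set.mem_iInter, hA, Set.mem_inter_iff, Set.mem_Icc] at hx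
      have : ∀ n : ℕ, |x - c| ≤ 1/(n+1) := by
        intro n
        rw [abs_sub_le_iff]
        constructor <;> linarith [(hx n).1.1, (hx n).1.2]
      have h0 : |x - c| ≤ 0 := by
        by_contra h
        push_neg at h
        obtain ⟨n, hn⟩ := exists_nat_one_div_lt h
        exact absurd (this n) (by push_neg; exact_mod_cast hn)
      simp only [Set.mem_singleton_iff]
      have := abs_nonneg (x - c)
      nlinarith [abs_nonneg (x - c), sq_abs (x - c)]
    refine measure_mono_null hsub ?_
    rw [hμ, withDensity_apply _ (measurableSet_singleton c)]
    have : ν.restrict {c} = 0 := by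
      rw [Measure.restrict_eq_zero, hν, Measure.restrict_apply (measurableSet_singleton c)]
      exact measure_mono_null Set.inter_subset_left (measure_singleton c)
    rw [this, lintegral_zero_measure]
  have htend : Tendsto (μ ∘ A) atTop (𝓝 0) := by
    rw [← hInter]
    exact tendsto_measure_iInter_atTop (fun n => (hAmeas n).nullMeasurableSet) hanti
      ⟨0, ne_top_of_le_ne_top hμuniv (measure_mono (Set.subset_univ _))⟩
  have : ∀ᶠ n in atTop, μ (A n) < ε := htend.eventually_lt_const (pos_iff_ne_zero.2 hε)
  obtain ⟨n, hn⟩ := this.exists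
  refine ⟨1/(n+1), by positivity, ?_⟩
  have hAsub : A n ⊆ Set.Icc 0 T := Set.inter_subset_right
  have h1 : ∫⁻ r in A n, f r = ∫⁻ r in A n, f' r := by
    apply lintegral_congr_ae
    have h := hff'
    rw [hν] at h
    exact ae_restrict_of_ae_restrict_of_subset hAsub h
  have h2 : μ (A n) = ∫⁻ r in A n, f' r := by
    rw [hμ, withDensity_apply _ (hAmeas n), hν, Measure.restrict_restrict (hAmeas n),
      Set.inter_eq_left.2 hAsub]
  calc ∫⁻ r in A n, f r = μ (A n) := by rw [h1, h2]
    _ < ε := hn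

lemma exists_good_point {T : ℝ} {P : ℝ → Prop}
    (hae : ∀ᵐ r ∂(volume.restrict (Set.Icc 0 T)), P r)
    {α β : ℝ} (h0 : 0 ≤ α) (hαβ : α < β) (hβ : β ≤ T) :
    ∃ x, x ∈ Set.Ioo α β ∧ P x := by
  by_contra h
  push_neg at h
  have hsub : Set.Ioo α β ⊆ {x | ¬ P x} := fun x hx => h x hx
  have h0' : volume.restrict (Set.Icc 0 T) {x | ¬ P x} = 0 := hae
  have hz : volume.restrict (Set.Icc 0 T) (Set.Ioo α β) = 0 := measure_mono_null hsub h0'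
  rw [Measure.restrict_apply measurableSet_Ioo,
    Set.inter_eq_left.2 (Set.Ioo_subset_Icc_self.trans (Set.Icc_subset_Icc h0 hβ))] at hz
  simp only [Real.volume_Ioo, ENNReal.ofReal_eq_zero] at hz
  linarith

lemma EReal.coe_ennreal_eq_coe_toReal {x : ℝ≥0∞} (hx : x ≠ ⊤) :
    (x : EReal) = ((x.toReal : ℝ) : EReal) := by
  nth_rewrite 1 [← ENNReal.ofReal_toReal hx]
  rw [EReal.coe_ennreal_ofReal, max_eq_left ENNReal.toReal_nonneg]

end Aux

/-- **dissipation via a strong upper gradient.** If `g` is a strong upper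
gradient of `E`, `u` is absolutely continuous on `[0,T]` with metric derivative `≤ 1` a.e.,
and `E ∘ u` agrees a.e. with a finite non-increasing `ψ` with `ψ'(t) ≤ -g(u(t))` a.e., then
`E ∘ u` is absolutely continuous and the energy dissipation equality
`E(u(s)) - E(u(t)) = ∫_s^t g(u(r)) dr` holds for all `0 ≤ s ≤ t ≤ T`. -/
theorem energy_dissipation_equality
    (E : S → EReal) (hbot : ∀ z, E z ≠ ⊥) (hproper : ∃ z, E z ≠ ⊤)
    (g : S → ℝ≥0∞) (hg : IsStrongUpperGradient g E)
    (T : ℝ) (hT : 0 ≤ T) (u : ℝ → S) (hAC : IsACOn u 0 T)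
    (md : ℝ → ℝ)
    (hmd : ∀ᵐ t ∂(volume.restrict (Set.Icc 0 T)),
      HasMetricDerivAt u t (md t) ∧ md t ≤ 1 ∧ 0 ≤ md t)
    (ψ ψd : ℝ → ℝ) (hψmono : AntitoneOn ψ (Set.Icc 0 T))
    (hae : ∀ᵐ t ∂(volume.restrict (Set.Icc 0 T)), E (u t) = (ψ t : EReal))
    (hψd : ∀ᵐ t ∂(volume.restrict (Set.Icc 0 T)),
      HasDerivAt ψ (ψd t) t ∧ g (u t) ≤ ENNReal.ofReal (-ψd t)) :
    IsACOn (fun t => (E (u t)).toReal) 0 T ∧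
      ∀ s t : ℝ, 0 ≤ s → s ≤ t → t ≤ T →
        E (u s) = E (u t) + ((∫⁻ r in Set.Icc s t, g (u r) : ℝ≥0∞) : EReal) := by
  obtain ⟨gmeas, hgineq⟩ := hg u 0 T hAC
  have hmd1 : ∀ᵐ t ∂(volume.restrict (Set.Icc 0 T)), HasMetricDerivAt u t (md t) :=
    hmd.mono fun t h => h.1
  -- the upper-gradient inequality with `g` alone on the right-hand side
  have hkey : ∀ s t : ℝ, 0 ≤ s → s ≤ t → t ≤ T →
      (E (u t) - E (u s) ≤ ((∫⁻ r in Set.Icc s t, g (u r) : ℝ≥0∞) : EReal)) ∧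
      (E (u s) - E (u t) ≤ ((∫⁻ r in Set.Icc s t, g (u r) : ℝ≥0∞) : EReal)) := by
    intro s t hs hst htT
    obtain ⟨h1, h2⟩ := hgineq md hmd1 s t hs hst htT
    have hmdle : ∀ᵐ r ∂(volume.restrict (Set.Icc s t)),
        g (u r) * ENNReal.ofReal (md r) ≤ g (u r) := by
      have hsub : Set.Icc s t ⊆ Set.Icc 0 T := Set.Icc_subset_Icc hs htT
      filter_upwards [ae_restrict_of_ae_restrict_of_subset hsub (hmd.mono fun r h => h.2.1)]
        with r hr
      calc g (u r) * ENNReal.ofReal (md r) ≤ g (u r) * 1 :=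
            mul_le_mul_right (ENNReal.ofReal_le_one.2 hr) _
        _ = g (u r) := mul_one _
    have hle : (∫⁻ r in Set.Icc s t, g (u r) * ENNReal.ofReal (md r)) ≤
        ∫⁻ r in Set.Icc s t, g (u r) := lintegral_mono_ae hmdle
    have hle' : ((∫⁻ r in Set.Icc s t, g (u r) * ENNReal.ofReal (md r) : ℝ≥0∞) : EReal) ≤
        ((∫⁻ r in Set.Icc s t, g (u r) : ℝ≥0∞) : EReal) :=
      EReal.coe_ennreal_le_coe_ennreal_iff.2 hle
    exact ⟨h1.trans hle', h2.trans hle'⟩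
  -- total integral is finite
  have hItot : (∫⁻ r in Set.Icc 0 T, g (u r)) ≤ ENNReal.ofReal (ψ 0 - ψ T) := by
    calc (∫⁻ r in Set.Icc 0 T, g (u r))
        ≤ ∫⁻ r in Set.Icc 0 T, ENNReal.ofReal (-ψd r) :=
          lintegral_mono_ae (hψd.mono fun t h => h.2)
      _ ≤ ENNReal.ofReal (ψ 0 - ψ T) :=
          antitone_lintegral_neg_deriv_le hT hψmono (hψd.mono fun t h => h.1)
  have hfin : (∫⁻ r in Set.Icc 0 T, g (u r)) ≠ ⊤ :=
    (hItot.trans_lt ENNReal.ofReal_lt_top).ne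
  have hIfin : ∀ {α β : ℝ}, 0 ≤ α → β ≤ T →
      (∫⁻ r in Set.Icc α β, g (u r)) ≠ ⊤ := by
    intro α β h0 hβ
    exact ne_top_of_le_ne_top hfin (lintegral_mono_set (Set.Icc_subset_Icc h0 hβ))
  -- the main equality
  have hmain : ∀ s t : ℝ, 0 ≤ s → s ≤ t → t ≤ T →
      E (u s) = E (u t) + ((∫⁻ r in Set.Icc s t, g (u r) : ℝ≥0∞) : EReal) := by
    intro s t hs hst htT
    rcases eq_or_lt_of_le hst with rfl | hlt
    · have : (∫⁻ r in Set.Icc s s, g (u r)) = 0 := by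
        rw [Set.Icc_self, Measure.restrict_eq_zero.2 (by simp), lintegral_zero_measure]
      rw [this, EReal.coe_ennreal_zero, add_zero]
    · -- fixed auxiliary points to show finiteness
      have h3lt1 : s < (2*s+t)/3 := by linarith
      have h3lt2 : (2*s+t)/3 < (s+2*t)/3 := by linarith
      have h3lt3 : (s+2*t)/3 < t := by linarith
      obtain ⟨s₀, hs₀mem, hs₀ψ⟩ := exists_good_point hae hs h3lt1 (by linarith)
      obtain ⟨t₀, ht₀mem, ht₀ψ⟩ := exists_good_point hae (by linarith : (0:ℝ) ≤ (s+2*t)/3)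
        h3lt3 htT
      have hs₀T : s₀ ≤ T := by have := hs₀mem.2; linarith
      have ht₀0 : 0 ≤ t₀ := by have := ht₀mem.1; linarith
      have hEs_ne_top : E (u s) ≠ ⊤ := by
        intro htop
        have h := (hkey s s₀ hs hs₀mem.1.le hs₀T).2
        rw [htop, hs₀ψ, EReal.top_sub_coe] at h
        exact (hIfin hs hs₀T) (EReal.coe_ennreal_eq_top_iff.1 (top_le_iff.1 h))
      have hEt_ne_top : E (u t) ≠ ⊤ := by
        intro htop
        have h := (hkey t₀ t ht₀0 ht₀mem.2.le htT).1
        rw [htop, ht₀ψ, EReal.top_sub_coe] at h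
        exact (hIfin ht₀0 htT) (EReal.coe_ennreal_eq_top_iff.1 (top_le_iff.1 h))
      set a := (E (u s)).toReal with ha
      set b := (E (u t)).toReal with hb
      have hEa : E (u s) = (a : EReal) := (EReal.coe_toReal hEs_ne_top (hbot _)).symm
      have hEb : E (u t) = (b : EReal) := (EReal.coe_toReal hEt_ne_top (hbot _)).symm
      set Ist := (∫⁻ r in Set.Icc s t, g (u r)) with hIst
      have hIstfin : Ist ≠ ⊤ := hIfin hs htT
      set IstR := Ist.toReal with hIstR
      -- upper bound : a - b ≤ IstR
      have hub : a - b ≤ IstR := by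
        have h := (hkey s t hs hst htT).2
        rw [hEa, hEb] at h
        rw [EReal.coe_ennreal_eq_coe_toReal hIstfin, ← EReal.coe_sub] at h
        exact_mod_cast h
      -- lower bound, up to ε
      have hlow : ∀ ε : ℝ, 0 < ε → IstR ≤ (a - b) + 4*ε := by
        intro ε hε
        have hεne : (ENNReal.ofReal ε) ≠ 0 := by simp [hε]
        obtain ⟨δ₁, hδ₁, hsmall₁⟩ := small_lintegral_near gmeas hfin s hεne
        obtain ⟨δ₂, hδ₂, hsmall₂⟩ := small_lintegral_near gmeas hfin t hεne
        set β₁ := min (s + δ₁) ((2*s+t)/3) with hβ₁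
        set α₂ := max (t - δ₂) ((s+2*t)/3) with hα₂
        obtain ⟨s', hs'mem, hs'ψ⟩ := exists_good_point (α := s) (β := β₁) hae hs
          (lt_min (by linarith) h3lt1) (le_trans (min_le_right _ _) (by linarith))
        obtain ⟨t', ht'mem, ht'ψ⟩ := exists_good_point (α := α₂) (β := t) hae
          (le_trans (by linarith : (0:ℝ) ≤ (s+2*t)/3) (le_max_right _ _))
          ((max_lt (by linarith) h3lt3)) htT
        have hs'0 : 0 ≤ s' := le_trans hs hs'mem.1.le
        have hs's : s ≤ s' := hs'mem.1.le
        have hs'T : s' ≤ T := by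
          have := hs'mem.2.trans_le (min_le_right _ _); linarith
        have ht'0 : 0 ≤ t' := by
          have := (le_max_right (t - δ₂) ((s+2*t)/3)).trans_lt ht'mem.1; linarith
        have ht't : t' ≤ t := ht'mem.2.le
        have hs't' : s' ≤ t' := by
          have h1 := hs'mem.2.trans_le (min_le_right _ _)
          have h2 := (le_max_right (t - δ₂) ((s+2*t)/3)).trans_lt ht'mem.1
          linarith
        -- h2 : ψ s' - a ≤ (I s s').toReal
        have hIss'fin : (∫⁻ r in Set.Icc s s', g (u r)) ≠ ⊤ := hIfin hs hs'T
        have hIt'tfin : (∫⁻ r in Set.Icc t' t, g (u r)) ≠ ⊤ := hIfin ht'0 htT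
        have hIs't'fin : (∫⁻ r in Set.Icc s' t', g (u r)) ≠ ⊤ := hIfin hs'0 (ht't.trans htT)
        have h2R : ψ s' - a ≤ (∫⁻ r in Set.Icc s s', g (u r)).toReal := by
          have h := (hkey s s' hs hs's hs'T).1
          rw [hEa, hs'ψ] at h
          rw [EReal.coe_ennreal_eq_coe_toReal hIss'fin, ← EReal.coe_sub] at h
          exact_mod_cast h
        have h3R : b - ψ t' ≤ (∫⁻ r in Set.Icc t' t, g (u r)).toReal := by
          have h := (hkey t' t ht'0 ht't htT).1
          rw [hEb, ht'ψ] at h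
          rw [EReal.coe_ennreal_eq_coe_toReal hIt'tfin, ← EReal.coe_sub] at h
          exact_mod_cast h
        -- h4 : I s' t' ≤ ψ s' - ψ t'
        have hmem_s' : s' ∈ Set.Icc 0 T := ⟨hs'0, hs'T⟩
        have hmem_t' : t' ∈ Set.Icc 0 T := ⟨ht'0, ht't.trans htT⟩
        have h4R : (∫⁻ r in Set.Icc s' t', g (u r)).toReal ≤ ψ s' - ψ t' := by
          have hsub : Set.Icc s' t' ⊆ Set.Icc 0 T := Set.Icc_subset_Icc hs'0 (ht't.trans htT)
          have h4 : (∫⁻ r in Set.Icc s' t', g (u r)) ≤ ENNReal.ofReal (ψ s' - ψ t') := by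
            calc (∫⁻ r in Set.Icc s' t', g (u r))
                ≤ ∫⁻ r in Set.Icc s' t', ENNReal.ofReal (-ψd r) :=
                  lintegral_mono_ae (ae_restrict_of_ae_restrict_of_subset hsub
                    (hψd.mono fun r h => h.2))
              _ ≤ ENNReal.ofReal (ψ s' - ψ t') :=
                  antitone_lintegral_neg_deriv_le hs't' (hψmono.mono hsub)
                    (ae_restrict_of_ae_restrict_of_subset hsub (hψd.mono fun r h => h.1))
          exact ENNReal.toReal_le_of_le_ofReal
            (sub_nonneg.2 (hψmono hmem_s' hmem_t' hs't')) h4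
        -- h5 : Ist ≤ I(s,s') + I(s',t') + I(t',t)
        have h5R : IstR ≤ (∫⁻ r in Set.Icc s s', g (u r)).toReal +
            (∫⁻ r in Set.Icc s' t', g (u r)).toReal +
            (∫⁻ r in Set.Icc t' t, g (u r)).toReal := by
          have h5 : Ist ≤ (∫⁻ r in Set.Icc s s', g (u r)) +
              (∫⁻ r in Set.Icc s' t', g (u r)) + (∫⁻ r in Set.Icc t' t, g (u r)) := by
            calc Ist ≤ ∫⁻ r in Set.Icc s s' ∪ Set.Icc s' t' ∪ Set.Icc t' t, g (u r) := by
                  apply lintegral_mono_set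
                  intro x hx
                  rcases le_or_gt x s' with h | h
                  · exact Set.mem_union_left _ (Set.mem_union_left _ ⟨hx.1, h⟩)
                  rcases le_or_gt x t' with h' | h'
                  · exact Set.mem_union_left _ (Set.mem_union_right _ ⟨h.le, h'⟩)
                  · exact Set.mem_union_right _ ⟨h'.le, hx.2⟩
              _ ≤ (∫⁻ r in Set.Icc s s' ∪ Set.Icc s' t', g (u r)) +
                  (∫⁻ r in Set.Icc t' t, g (u r)) := lintegral_union_le _ _ _
              _ ≤ (∫⁻ r in Set.Icc s s', g (u r)) + (∫⁻ r in Set.Icc s' t', g (u r)) +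
                  (∫⁻ r in Set.Icc t' t, g (u r)) :=
                  add_le_add_left (lintegral_union_le _ _ _) _
          have := ENNReal.toReal_mono (by
            simp [ENNReal.add_ne_top, hIss'fin, hIs't'fin, hIt'tfin]) h5
          rwa [ENNReal.toReal_add (by simp [ENNReal.add_ne_top, hIss'fin, hIs't'fin])
            hIt'tfin, ENNReal.toReal_add hIss'fin hIs't'fin] at this
        -- h6 : the small pieces
        have h6R : (∫⁻ r in Set.Icc s s', g (u r)).toReal < ε := by
          have hsub : Set.Icc s s' ⊆ Set.Icc (s - δ₁) (s + δ₁) ∩ Set.Icc 0 T := by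
            intro x hx
            have hx1 := hs'mem.2.trans_le (min_le_left _ _)
            exact ⟨⟨by linarith [hx.1], by linarith [hx.2]⟩, ⟨hs.trans hx.1, by nlinarith [hx.2]⟩⟩
          have := (lintegral_mono_set hsub).trans_lt hsmall₁
          exact (ENNReal.lt_ofReal_iff_toReal_lt hIss'fin).1 this
        have h7R : (∫⁻ r in Set.Icc t' t, g (u r)).toReal < ε := by
          have hsub : Set.Icc t' t ⊆ Set.Icc (t - δ₂) (t + δ₂) ∩ Set.Icc 0 T := by
            intro x hx
            have hx1 := (le_max_left (t - δ₂) ((s+2*t)/3)).trans_lt ht'mem.1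
            exact ⟨⟨by linarith [hx.1], by linarith [hx.2]⟩, ⟨ht'0.trans hx.1, hx.2.trans htT⟩⟩
          have := (lintegral_mono_set hsub).trans_lt hsmall₂
          exact (ENNReal.lt_ofReal_iff_toReal_lt hIt'tfin).1 this
        linarith
      have hlb : IstR ≤ a - b := by
        by_contra h
        push_neg at h
        have := hlow ((IstR - (a - b))/5) (by linarith)
        linarith
      have habI : a = b + IstR := by linarith [le_antisymm hub hlb]
      rw [hEa, hEb, ← ENNReal.ofReal_toReal hIstfin, EReal.coe_ennreal_ofReal,
        max_eq_left ENNReal.toReal_nonneg, ← EReal.coe_add, ← hIstR, habI]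
  refine ⟨?_, hmain⟩
  -- absolute continuity of E ∘ u
  refine ⟨fun r => (g (u r)).toReal, integrable_toReal_of_lintegral_ne_top gmeas hfin, ?_⟩
  intro s t hs hst htT
  set Ist := (∫⁻ r in Set.Icc s t, g (u r)) with hIst
  have hIstfin : Ist ≠ ⊤ :=
    ne_top_of_le_ne_top hfin (lintegral_mono_set (Set.Icc_subset_Icc hs htT))
  have hint : ∫ r in s..t, (g (u r)).toReal = Ist.toReal := by
    rw [intervalIntegral.integral_of_le hst]
    have hrestr : volume.restrict (Set.Ioc s t) = volume.restrict (Set.Icc s t) :=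
      Measure.restrict_congr_set Ioc_ae_eq_Icc
    rw [show (∫ r in Set.Ioc s t, (g (u r)).toReal) = ∫ r in Set.Icc s t, (g (u r)).toReal
      by rw [hrestr]]
    have hmeas' : AEMeasurable (fun r => g (u r)) (volume.restrict (Set.Icc s t)) :=
      gmeas.mono_measure (Measure.restrict_mono (Set.Icc_subset_Icc hs htT) le_rfl)
    exact integral_toReal hmeas' (ae_lt_top' hmeas' hIstfin)
  have heq := hmain s t hs hst htT
  show dist ((E (u s)).toReal) ((E (u t)).toReal) ≤ ∫ r in s..t, (g (u r)).toReal
  rw [hint]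
  by_cases htop : E (u t) = ⊤
  · have hstop : E (u s) = ⊤ := by
      rw [heq, htop, EReal.top_add_of_ne_bot (EReal.coe_ennreal_ne_bot _)]
    rw [hstop, htop]
    simp [ENNReal.toReal_nonneg]
  · have hab : (E (u s)).toReal = (E (u t)).toReal + Ist.toReal := by
      rw [heq, EReal.toReal_add htop (hbot _) (by
        simp [EReal.coe_ennreal_eq_top_iff]; exact hIstfin) (EReal.coe_ennreal_ne_bot _),
        EReal.toReal_coe_ennreal]
    rw [Real.dist_eq, hab]
    simp [abs_of_nonneg ENNReal.toReal_nonneg]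
end

section
/- Pushforward by pointwise minimizers solves the Wasserstein-constrained minimization: Let X be a reflexive separable Banach space, E : X → (-∞,∞] weakly continuous on its closed convex domain, μ ∈ P_∞(X), and τ > 0. Suppose r_τ : X → X is a Borel measurable map with r_τ(x) ∈ argmin_{z ∈ B̄_τ(x)} E(z) for all x. Then (r_τ)_# μ is a minimizer of ν ↦ ∫ E dν over all ν ∈ P_∞(X) with W_∞(μ,ν) ≤ τ. -/
open NormedSpace
set_option linter.unusedSectionVars false
set_option maxHeartbeats 1000000


open Filter Topology MeasureTheory
open scoped ENNReal

variable {X : Type*} [NormedAddCommGroup X] [NormedSpace ℝ X] [CompleteSpace X]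
  [MeasurableSpace X] [BorelSpace X] [TopologicalSpace.SeparableSpace X]

/-- The set of couplings of `μ` and `ν`. -/
def Couplings (μ ν : Measure X) : Set (Measure (X × X)) :=
  {γ | γ.map Prod.fst = μ ∧ γ.map Prod.snd = ν}

/-- The `∞`-Wasserstein distance. -/
noncomputable def Winf (μ ν : Measure X) : ℝ≥0∞ :=
  ⨅ γ ∈ Couplings μ ν, essSup (fun q : X × X => ENNReal.ofReal (dist q.1 q.2)) γ

/-- Positive part of an extended real, as an extended nonnegative real. -/
noncomputable def erealPos (x : EReal) : ℝ≥0∞ :=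
  if x = ⊤ then ⊤ else ENNReal.ofReal x.toReal

/-- Integral of an `(-∞,∞]`-valued potential against a measure, valued in `EReal`. -/
noncomputable def potIntegral (E : X → EReal) (ν : Measure X) : EReal :=
  ((∫⁻ x, erealPos (E x) ∂ν : ℝ≥0∞) : EReal) - ((∫⁻ x, erealPos (-(E x)) ∂ν : ℝ≥0∞) : EReal)

lemma erealPos_mono : Monotone erealPos := by
  intro x y h
  unfold erealPos
  rcases eq_or_ne y ⊤ with hy | hy
  · simp [hy]
  · rw [if_neg hy, if_neg (by rintro rfl; exact hy (top_le_iff.mp h))]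
    rcases eq_or_ne x ⊥ with hx | hx
    · simp [hx]
    · exact ENNReal.ofReal_le_ofReal (EReal.toReal_le_toReal h hx hy)

lemma erealPos_coe (r : ℝ) : erealPos (r : EReal) = ENNReal.ofReal r := by
  simp [erealPos]

lemma erealPos_le_iSup (y : ℕ → EReal) : erealPos (⨆ n, y n) ≤ ⨆ n, erealPos (y n) := by
  apply ENNReal.le_of_forall_nnreal_lt
  intro r hr
  have hlt : ((r : ℝ) : EReal) < ⨆ n, y n := by
    rcases eq_or_ne (⨆ n, y n) ⊤ with h | h
    · rw [h]; exact EReal.coe_lt_top _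
    · -- finite case
      unfold erealPos at hr
      rw [if_neg h] at hr
      have hr' : (r : ℝ) < (⨆ n, y n).toReal := by
        have := (ENNReal.lt_ofReal_iff_toReal_lt (by simp)).mp hr
        simpa using this
      have hne : (⨆ n, y n) ≠ ⊥ := by
        intro hb
        rw [hb] at hr'
        simp only [EReal.toReal_bot] at hr'
        exact absurd hr' (not_lt.mpr r.coe_nonneg)
      calc ((r:ℝ) : EReal) < ((⨆ n, y n).toReal : EReal) := by exact_mod_cast hr'
        _ ≤ ⨆ n, y n := by rw [EReal.coe_toReal h hne]
  obtain ⟨n, hn⟩ := lt_iSup_iff.mp hlt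
  calc (r : ℝ≥0∞) = erealPos ((r:ℝ) : EReal) := by simp [erealPos_coe, ENNReal.ofReal_coe_nnreal]
    _ ≤ erealPos (y n) := erealPos_mono hn.le
    _ ≤ ⨆ n, erealPos (y n) := le_iSup (fun n => erealPos (y n)) n

lemma iInf_erealPos_le (y : ℕ → EReal) : ⨅ n, erealPos (y n) ≤ erealPos (⨅ n, y n) := by
  apply ENNReal.le_of_forall_nnreal_lt
  intro r hr
  have h : ∀ n, ((r:ℝ) : EReal) < y n := by
    intro n
    have hrn : (r : ℝ≥0∞) < erealPos (y n) := lt_of_lt_of_le hr (iInf_le _ n)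
    by_contra hc
    push_neg at hc
    have : erealPos (y n) ≤ erealPos ((r:ℝ) : EReal) := erealPos_mono hc
    rw [erealPos_coe, ENNReal.ofReal_coe_nnreal] at this
    exact absurd (lt_of_lt_of_le hrn this) (lt_irrefl _)
  have : ((r:ℝ) : EReal) ≤ ⨅ n, y n := le_iInf fun n => (h n).le
  calc (r : ℝ≥0∞) = erealPos ((r:ℝ) : EReal) := by simp [erealPos_coe, ENNReal.ofReal_coe_nnreal]
    _ ≤ erealPos (⨅ n, y n) := erealPos_mono this

lemma iSup_min_natCast (a : ℝ≥0∞) : ⨆ k : ℕ, min a (k : ℝ≥0∞) = a := by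
  apply le_antisymm (iSup_le fun k => min_le_left _ _)
  rcases eq_or_ne a ⊤ with h | h
  · subst h
    by_contra hc
    push_neg at hc
    obtain ⟨n, hn⟩ := ENNReal.exists_nat_gt hc.ne
    exact absurd (lt_of_lt_of_le hn (by simpa using le_iSup (fun k : ℕ => min ⊤ (k:ℝ≥0∞)) n)) (lt_irrefl _)
  · obtain ⟨n, hn⟩ := ENNReal.exists_nat_gt h
    calc a = min a n := (min_eq_left hn.le).symm
      _ ≤ ⨆ k : ℕ, min a (k : ℝ≥0∞) := le_iSup (f := fun k : ℕ => min a (k : ℝ≥0∞)) n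

lemma measurable_erealPos : Measurable erealPos := by
  unfold erealPos
  apply Measurable.ite (MeasurableSet.singleton ⊤) measurable_const
  exact ENNReal.measurable_ofReal.comp measurable_ereal_toReal

lemma EReal.neg_iSup' (y : ℕ → EReal) : -(⨆ n, y n) = ⨅ n, -(y n) := by
  apply le_antisymm
  · exact le_iInf fun n => EReal.neg_le_neg_iff.mpr (le_iSup _ n)
  · rw [← EReal.neg_le_neg_iff]
    simp only [neg_neg]
    exact iSup_le fun n => by
      have := iInf_le (fun n => -(y n)) n
      rw [← EReal.neg_le_neg_iff] at this
      simpa using this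

/-- Infimum of `E` over the countable set `D ∩ B̄(x, τ + 1/(n+1))`. -/
noncomputable def Mfun (E : X → EReal) (D : Set X) (τ : ℝ) (n : ℕ) (x : X) : EReal :=
  ⨅ d : D, if ‖(d : X) - x‖ ≤ τ + 1 / (n + 1) then E d else ⊤

lemma Mfun_mono (E : X → EReal) (D : Set X) (τ : ℝ) (x : X) :
    Monotone (fun n => Mfun E D τ n x) := by
  intro n m hnm
  refine le_iInf fun d => ?_
  refine iInf_le_of_le d ?_
  by_cases h : ‖(d : X) - x‖ ≤ τ + 1 / (m + 1)
  · have hle : τ + 1 / ((m : ℝ) + 1) ≤ τ + 1 / ((n : ℝ) + 1) := by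
      have h1 : (0 : ℝ) < (n : ℝ) + 1 := by positivity
      have h2 : (n : ℝ) + 1 ≤ (m : ℝ) + 1 := by exact_mod_cast Nat.succ_le_succ hnm
      have := one_div_le_one_div_of_le h1 h2
      linarith
    rw [if_pos h, if_pos (h.trans hle)]
  · rw [if_neg h]; exact le_top

lemma Mfun_measurable (E : X → EReal) {D : Set X} (hDc : D.Countable) (τ : ℝ) (n : ℕ) :
    Measurable (Mfun E D τ n) := by
  haveI := hDc.to_subtype
  refine Measurable.iInf fun d => ?_
  refine Measurable.ite ?_ measurable_const measurable_const
  exact (isClosed_le (by fun_prop) continuous_const).measurableSet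

lemma Mfun_le (E : X → EReal) {D : Set X}
    (hDs : D ⊆ {x : X | E x ≠ ⊤}) (hDd : {x : X | E x ≠ ⊤} ⊆ closure D)
    (hcontOn : ContinuousOn E {x : X | E x ≠ ⊤})
    (τ : ℝ) (n : ℕ) {x z : X} (hz : ‖z - x‖ < τ + 1 / (n + 1)) :
    Mfun E D τ n x ≤ E z := by
  by_cases hzT : E z = ⊤
  · rw [hzT]; exact le_top
  · have hzs : z ∈ {x : X | E x ≠ ⊤} := hzT
    refine le_of_forall_gt_imp_ge_of_dense fun c hc => ?_
    have hmem : E ⁻¹' Set.Iio c ∈ 𝓝[{x : X | E x ≠ ⊤}] z :=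
      hcontOn z hzs (Iio_mem_nhds hc)
    obtain ⟨u, hu_open, hzu, hus⟩ := mem_nhdsWithin.mp hmem
    have hzu' : z ∈ u ∩ Metric.ball x (τ + 1 / (n + 1)) :=
      ⟨hzu, by rwa [Metric.mem_ball, dist_eq_norm]⟩
    obtain ⟨d, hd_mem, hdD⟩ :=
      mem_closure_iff.mp (hDd hzs) _ (hu_open.inter Metric.isOpen_ball) hzu'
    have hdball : ‖d - x‖ ≤ τ + 1 / (n + 1) := by
      have := hd_mem.2
      rw [Metric.mem_ball, dist_eq_norm] at this
      exact this.le
    have hdlt : E d < c := hus ⟨hd_mem.1, hDs hdD⟩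
    calc Mfun E D τ n x ≤ if ‖((⟨d, hdD⟩ : D) : X) - x‖ ≤ τ + 1 / (n + 1) then E d else ⊤ :=
          iInf_le _ (⟨d, hdD⟩ : D)
      _ = E d := if_pos hdball
      _ ≤ c := hdlt.le

lemma isClosed_weak_of_convex {s : Set X} (hs : IsClosed s) (hc : Convex ℝ s) :
    IsClosed (X := WeakSpace ℝ X) s := by
  have h := hc.toWeakSpace_closure (𝕜 := ℝ)
  have himg : ⇑(toWeakSpace ℝ X) '' s = s := by
    ext x; constructor
    · rintro ⟨y, hy, rfl⟩; exact hy
    · intro hx; exact ⟨x, hx, rfl⟩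
  rw [hs.closure_eq, himg] at h
  have h2 : IsClosed (X := WeakSpace ℝ X) (closure (X := WeakSpace ℝ X) s) := isClosed_closure
  rwa [← h] at h2

lemma isCompact_weak_closedBall
    (hrefl : Function.Surjective (NormedSpace.inclusionInDoubleDual ℝ X))
    (c : X) (r : ℝ) :
    IsCompact (X := WeakSpace ℝ X) {x : X | ‖x - c‖ ≤ r} := by
  set j := NormedSpace.inclusionInDoubleDual ℝ X with hj
  have hinj : Function.Injective j := (inclusionInDoubleDualLi ℝ (E := X)).injective
  have hnorm : ∀ x : X, ‖j x‖ = ‖x‖ := fun x => (inclusionInDoubleDualLi ℝ (E := X)).norm_map x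
  set e : X ≃ₗ[ℝ] StrongDual ℝ (StrongDual ℝ X) := LinearEquiv.ofBijective (j : X →ₗ[ℝ] _) ⟨hinj, hrefl⟩ with he
  have hesymm_cont : Continuous (fun Φ : WeakDual ℝ (StrongDual ℝ X) => toWeakSpace ℝ X (e.symm Φ)) := by
    apply WeakBilin.continuous_of_continuous_eval
    intro y
    have heq : (fun Φ : WeakDual ℝ (StrongDual ℝ X) => (topDualPairing ℝ X).flip (toWeakSpace ℝ X (e.symm Φ)) y)
        = fun Φ : WeakDual ℝ (StrongDual ℝ X) => topDualPairing ℝ (StrongDual ℝ X) Φ y := by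
      funext Φ
      have h1 : j (e.symm Φ) = Φ := e.apply_symm_apply Φ
      calc (topDualPairing ℝ X).flip (toWeakSpace ℝ X (e.symm Φ)) y = y (e.symm Φ) := rfl
        _ = (j (e.symm Φ)) y := rfl
        _ = Φ y := by rw [h1]; rfl
        _ = topDualPairing ℝ (StrongDual ℝ X) Φ y := rfl
    exact heq ▸ WeakBilin.eval_continuous _ y
  have hcomp := WeakDual.isCompact_closedBall (𝕜 := ℝ) (j c) r
  have key : ∀ y : X, dist (j y) (j c) = ‖y - c‖ := fun y => by rw [← hnorm, map_sub]; exact dist_eq_norm (j y) (j c)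
  have himg : (fun Φ : WeakDual ℝ (StrongDual ℝ X) => toWeakSpace ℝ X (e.symm Φ)) ''
      (WeakDual.toStrongDual ⁻¹' Metric.closedBall (j c) r)
      = {x : X | ‖x - c‖ ≤ r} := by
    ext x
    simp only [Set.mem_image, Set.mem_preimage, Metric.mem_closedBall, Set.mem_setOf_eq]
    constructor
    · rintro ⟨Φ, hΦ, rfl⟩
      have h1 : j (e.symm Φ) = WeakDual.toStrongDual Φ := e.apply_symm_apply Φ
      have h2 : dist (j (e.symm Φ)) (j c) ≤ r := by rw [h1]; exact hΦ
      exact (key (e.symm Φ)).symm.le.trans h2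
    · intro hx
      refine ⟨e x, ?_, ?_⟩
      · show dist ((e x : StrongDual ℝ (StrongDual ℝ X))) (j c) ≤ r
        have h3 : (e x : StrongDual ℝ (StrongDual ℝ X)) = j x := rfl
        exact (key x).le.trans hx
      · show toWeakSpace ℝ X (e.symm (e x)) = toWeakSpace ℝ X x
        erw [e.symm_apply_apply]; rfl
  erw [← himg]
  exact hcomp.image hesymm_cont

lemma Mfun_key
    (hrefl : Function.Surjective (NormedSpace.inclusionInDoubleDual ℝ X))
    (E : X → EReal) (hbot : ∀ z, E z ≠ ⊥)
    (hdomClosed : IsClosed {x : X | E x ≠ ⊤})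
    (hdomConvex : Convex ℝ {x : X | E x ≠ ⊤})
    (hweakCont : ContinuousOn (fun x : WeakSpace ℝ X => E x) {x : X | E x ≠ ⊤})
    {D : Set X} (hDs : D ⊆ {x : X | E x ≠ ⊤})
    (τ : ℝ) (x y : X)
    (hmin : ∀ z : X, ‖z - x‖ ≤ τ → E y ≤ E z) :
    E y ≤ ⨆ n, Mfun E D τ n x := by
  classical
  set s := {x : X | E x ≠ ⊤} with hs_def
  set L := ⨆ n, Mfun E D τ n x with hL_def
  by_cases hLtop : L = ⊤
  · rw [hLtop]; exact le_top
  set a : ℕ → EReal := fun n =>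
    if L = ⊥ then ((-((n : ℝ) + 1) : ℝ) : EReal) else L + ((1 / ((n : ℝ) + 1) : ℝ) : EReal)
    with ha_def
  have haL : ∀ n, L < a n := by
    intro n
    by_cases hLbot : L = ⊥
    · rw [ha_def]; simp only [if_pos hLbot, hLbot]
      exact EReal.bot_lt_coe _
    · rw [ha_def]; simp only [if_neg hLbot]
      have hLr : L = ((L.toReal : ℝ) : EReal) := (EReal.coe_toReal hLtop hLbot).symm
      rw [hLr, ← EReal.coe_add]
      apply EReal.coe_lt_coe_iff.mpr
      have : (0:ℝ) < 1 / ((n : ℝ) + 1) := by positivity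
      linarith
  have haTop : ∀ n, a n ≠ ⊤ := by
    intro n
    by_cases hLbot : L = ⊥
    · rw [ha_def]; simp only [if_pos hLbot]; exact EReal.coe_ne_top _
    · rw [ha_def]; simp only [if_neg hLbot]
      have hLr : L = ((L.toReal : ℝ) : EReal) := (EReal.coe_toReal hLtop hLbot).symm
      rw [hLr, ← EReal.coe_add]
      exact EReal.coe_ne_top _
  have haAnti : Antitone a := by
    intro n m hnm
    by_cases hLbot : L = ⊥
    · rw [ha_def]; simp only [if_pos hLbot]
      apply EReal.coe_le_coe_iff.mpr
      have : (n : ℝ) ≤ (m : ℝ) := by exact_mod_cast hnm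
      linarith
    · rw [ha_def]; simp only [if_neg hLbot]
      apply add_le_add_right
      apply EReal.coe_le_coe_iff.mpr
      have h1 : (0 : ℝ) < (n : ℝ) + 1 := by positivity
      have h2 : (n : ℝ) + 1 ≤ (m : ℝ) + 1 := by exact_mod_cast Nat.succ_le_succ hnm
      exact one_div_le_one_div_of_le h1 h2
  -- the compact nested sets
  set C : ℕ → Set X := fun n =>
    (s ∩ (fun y : X => E y) ⁻¹' Set.Iic (a n)) ∩ {z : X | ‖z - x‖ ≤ τ + 1 / ((n : ℝ) + 1)}
    with hC_def
  have hball_closed : ∀ r : ℝ, IsClosed (X := WeakSpace ℝ X) {z : X | ‖z - x‖ ≤ r} := by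
    intro r
    have h1 : IsClosed {z : X | ‖z - x‖ ≤ r} := isClosed_le (by fun_prop) continuous_const
    have h2 : Convex ℝ {z : X | ‖z - x‖ ≤ r} := by
      have : {z : X | ‖z - x‖ ≤ r} = Metric.closedBall x r := by
        ext z; simp [Metric.mem_closedBall, dist_eq_norm]
      rw [this]; exact convex_closedBall x r
    exact isClosed_weak_of_convex (X := X) h1 h2
  have hs_weak : IsClosed (X := WeakSpace ℝ X) s :=
    isClosed_weak_of_convex (X := X) hdomClosed hdomConvex
  have hC_closed : ∀ n, IsClosed (X := WeakSpace ℝ X) (C n) := by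
    intro n
    refine IsClosed.inter ?_ (hball_closed _)
    exact hweakCont.preimage_isClosed_of_isClosed hs_weak isClosed_Iic
  have hC_nonempty : ∀ n, (C n).Nonempty := by
    intro n
    have hML : Mfun E D τ n x ≤ L := le_iSup (fun n => Mfun E D τ n x) n
    have hlt : Mfun E D τ n x < a n := lt_of_le_of_lt hML (haL n)
    rw [Mfun] at hlt
    obtain ⟨d, hd⟩ := iInf_lt_iff.mp hlt
    by_cases hcond : ‖(d : X) - x‖ ≤ τ + 1 / ((n : ℝ) + 1)
    · rw [if_pos hcond] at hd
      exact ⟨(d : X), ⟨⟨hDs d.2, hd.le⟩, hcond⟩⟩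
    · rw [if_neg hcond] at hd
      exact absurd hd not_top_lt
  have hC_anti : ∀ n : ℕ, C (n + 1) ⊆ C n := by
    intro n z hz
    obtain ⟨⟨hz1, hz2⟩, hz3⟩ := hz
    simp only [Set.mem_setOf_eq] at hz3
    refine ⟨⟨hz1, le_trans hz2 (haAnti (Nat.le_succ n))⟩, ?_⟩
    simp only [Set.mem_setOf_eq]
    have h1 : (0 : ℝ) < (n : ℝ) + 1 := by positivity
    have h2 : (n : ℝ) + 1 ≤ ((n + 1 : ℕ) : ℝ) + 1 := by push_cast; linarith
    have h3 := one_div_le_one_div_of_le h1 h2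
    linarith
  have hC0_compact : IsCompact (X := WeakSpace ℝ X) (C 0) := by
    refine IsCompact.of_isClosed_subset (isCompact_weak_closedBall (X := X) hrefl x (τ + 2))
      (hC_closed 0) ?_
    intro z hz
    have h2 := hz.2
    replace h2 : ‖@id X z - x‖ ≤ τ + 1 / (((0 : ℕ) : ℝ) + 1) := h2
    norm_num at h2
    exact le_trans h2 (by linarith)
  obtain ⟨zs, hzs⟩ :=
    IsCompact.nonempty_iInter_of_sequence_nonempty_isCompact_isClosed
      (X := WeakSpace ℝ X) C hC_anti hC_nonempty hC0_compact hC_closed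
  set z0 : X := zs with hz0_def
  have hzsn : ∀ n : ℕ, z0 ∈ C n := fun n => Set.mem_iInter.mp hzs n
  have hzball : ‖z0 - x‖ ≤ τ := by
    by_contra hcon
    push_neg at hcon
    obtain ⟨n, hn⟩ := exists_nat_one_div_lt (show (0:ℝ) < ‖z0 - x‖ - τ by linarith)
    have h5 := (hzsn n).2
    simp only [Set.mem_setOf_eq] at h5
    linarith
  have hEzs : E z0 ≤ L := by
    by_cases hLbot : L = ⊥
    · exfalso
      have hb : ∀ n : ℕ, E z0 ≤ ((-((n : ℝ) + 1) : ℝ) : EReal) := by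
        intro n
        have := (hzsn n).1.2
        simp only [Set.mem_preimage, Set.mem_Iic] at this
        simpa only [ha_def, if_pos hLbot] using this
      have hne_top : E z0 ≠ ⊤ := (hzsn 0).1.1
      have hne_bot : E z0 ≠ ⊥ := hbot z0
      have hco : E z0 = (((E z0).toReal : ℝ) : EReal) := (EReal.coe_toReal hne_top hne_bot).symm
      obtain ⟨n, hn⟩ := exists_nat_gt (-(E z0).toReal)
      have h5 := hb n
      rw [hco, EReal.coe_le_coe_iff] at h5
      linarith
    · by_contra hcon
      push_neg at hcon
      have hEzs_ne_top : E z0 ≠ ⊤ := (hzsn 0).1.1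
      obtain ⟨c, hc1, hc2⟩ := EReal.exists_between_coe_real hcon
      have hLr : L = ((L.toReal : ℝ) : EReal) := (EReal.coe_toReal hLtop hLbot).symm
      rw [hLr, EReal.coe_lt_coe_iff] at hc1
      obtain ⟨n, hn⟩ := exists_nat_one_div_lt (show (0:ℝ) < c - L.toReal by linarith)
      have h3 := (hzsn n).1.2
      simp only [Set.mem_preimage, Set.mem_Iic] at h3
      simp only [ha_def, if_neg hLbot] at h3
      have h4 : L + ((1 / ((n : ℝ) + 1) : ℝ) : EReal) < (c : EReal) := by
        rw [hLr, ← EReal.coe_add]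
        apply EReal.coe_lt_coe_iff.mpr
        linarith
      exact absurd (lt_of_le_of_lt (le_trans h3 h4.le) hc2) (lt_irrefl _)
  exact le_trans (hmin z0 hzball) hEzs

lemma contOn_of_weak {E : X → EReal}
    (hweakCont : ContinuousOn (fun x : WeakSpace ℝ X => E x) {x : X | E x ≠ ⊤}) :
    ContinuousOn E {x : X | E x ≠ ⊤} := by
  have hc : Continuous (toWeakSpaceCLM ℝ X) := (toWeakSpaceCLM ℝ X).continuous
  have h := hweakCont.comp hc.continuousOn (fun x hx => hx)
  exact h

lemma measurable_E {E : X → EReal} (hdomClosed : IsClosed {x : X | E x ≠ ⊤})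
    (hcontOn : ContinuousOn E {x : X | E x ≠ ⊤}) : Measurable E := by
  classical
  have hEq : E = Set.piecewise {x : X | E x ≠ ⊤} E (fun _ => (⊤ : EReal)) := by
    funext y
    by_cases hy : y ∈ {x : X | E x ≠ ⊤}
    · rw [Set.piecewise_eq_of_mem _ _ _ hy]
    · rw [Set.piecewise_eq_of_notMem _ _ _ hy]
      simp only [Set.mem_setOf_eq, not_not] at hy
      exact hy
  rw [hEq]
  exact ContinuousOn.measurable_piecewise hcontOn continuousOn_const hdomClosed.measurableSet

/-- **pushforward by pointwise minimizers solves the Wasserstein-constrained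
minimization.** Let `X` be a reflexive separable Banach space, `E` weakly continuous on its
closed convex domain, `μ` a Borel probability measure with bounded support and `τ > 0`. If
`r_τ` is Borel measurable with `r_τ(x)` minimizing `E` over `B̄_τ(x)` for every `x`, then
`(r_τ)_#μ` minimizes `ν ↦ ∫ E dν` over all probability measures `ν` with bounded support and
`W_∞(μ,ν) ≤ τ`. -/
theorem pushforward_minimizes_wasserstein_constrained
    (hrefl : Function.Surjective (NormedSpace.inclusionInDoubleDual ℝ X))
    (E : X → EReal) (hbot : ∀ z, E z ≠ ⊥)
    (hdomClosed : IsClosed {x : X | E x ≠ ⊤})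
    (hdomConvex : Convex ℝ {x : X | E x ≠ ⊤})
    (hweakCont : ContinuousOn (fun x : WeakSpace ℝ X => E x) {x : X | E x ≠ ⊤})
    (μ : Measure X) [IsProbabilityMeasure μ]
    (hμ : ∃ s : Set X, Bornology.IsBounded s ∧ μ sᶜ = 0)
    (τ : ℝ) (hτ : 0 < τ)
    (rτ : X → X) (hrmeas : Measurable rτ)
    (hr : ∀ x : X, ‖rτ x - x‖ ≤ τ ∧ ∀ z : X, ‖z - x‖ ≤ τ → E (rτ x) ≤ E z) :
    ∀ ν : Measure X, IsProbabilityMeasure ν →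
      (∃ s : Set X, Bornology.IsBounded s ∧ ν sᶜ = 0) →
      Winf μ ν ≤ ENNReal.ofReal τ →
      potIntegral E (Measure.map rτ μ) ≤ potIntegral E ν := by
  classical
  intro ν hνP hνb hW
  have hcontOn : ContinuousOn E {x : X | E x ≠ ⊤} := contOn_of_weak hweakCont
  have hEmeas : Measurable E := measurable_E hdomClosed hcontOn
  have hsep : TopologicalSpace.IsSeparable {x : X | E x ≠ ⊤} :=
    ((TopologicalSpace.isSeparable_univ_iff).mpr inferInstance).mono (Set.subset_univ _)
  obtain ⟨D, hDs, hDc, hDd⟩ := hsep.exists_countable_dense_subset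
  set M : ℕ → X → EReal := Mfun E D τ with hM_def
  have hMmeas : ∀ n, Measurable (M n) := fun n => Mfun_measurable E hDc τ n
  have hMle : ∀ (n : ℕ) (x z : X), ‖z - x‖ < τ + 1 / ((n : ℝ) + 1) → M n x ≤ E z :=
    fun n x z h => Mfun_le E hDs hDd hcontOn τ n h
  have hMkey : ∀ x : X, E (rτ x) ≤ ⨆ n, M n x := fun x =>
    Mfun_key hrefl E hbot hdomClosed hdomConvex hweakCont hDs τ x (rτ x)
      (fun z hz => (hr x).2 z hz)
  have hposE : Measurable fun z => erealPos (E z) := measurable_erealPos.comp hEmeas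
  have hnegE : Measurable fun z => erealPos (-(E z)) := measurable_erealPos.comp hEmeas.neg
  have hposM : ∀ n, Measurable fun x => erealPos (M n x) :=
    fun n => measurable_erealPos.comp (hMmeas n)
  have hnegM : ∀ n, Measurable fun x => erealPos (-(M n x)) :=
    fun n => measurable_erealPos.comp (hMmeas n).neg
  have hγ : ∀ n : ℕ, ∃ γ : Measure (X × X), γ.map Prod.fst = μ ∧ γ.map Prod.snd = ν ∧
      ∀ᵐ q ∂γ, ‖q.2 - q.1‖ < τ + 1 / ((n : ℝ) + 1) := by
    intro n
    have hlt' : Winf μ ν < ENNReal.ofReal (τ + 1 / ((n : ℝ) + 1)) := by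
      refine lt_of_le_of_lt hW ?_
      rw [ENNReal.ofReal_lt_ofReal_iff (by positivity)]
      have : (0:ℝ) < 1 / ((n : ℝ) + 1) := by positivity
      linarith
    simp only [Winf] at hlt'
    obtain ⟨γ, hγlt⟩ := iInf_lt_iff.mp hlt'
    obtain ⟨hmem, hlt2⟩ := iInf_lt_iff.mp hγlt
    refine ⟨γ, hmem.1, hmem.2, ?_⟩
    filter_upwards [ENNReal.ae_le_essSup (fun q : X × X => ENNReal.ofReal (dist q.1 q.2))] with q hq
    have h3 := lt_of_le_of_lt hq hlt2
    rw [ENNReal.ofReal_lt_ofReal_iff (by positivity)] at h3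
    rwa [dist_comm, dist_eq_norm] at h3
  have hA : ∀ n : ℕ, (∫⁻ x, erealPos (M n x) ∂μ) ≤ ∫⁻ z, erealPos (E z) ∂ν := by
    intro n
    obtain ⟨γ, hγ1, hγ2, hγd⟩ := hγ n
    rw [← hγ1, ← hγ2, lintegral_map (hposM n) measurable_fst,
      lintegral_map hposE measurable_snd]
    refine lintegral_mono_ae ?_
    filter_upwards [hγd] with q hq
    exact erealPos_mono (hMle n q.1 q.2 hq)
  have hAr : (∫⁻ x, erealPos (E (rτ x)) ∂μ) ≤ ∫⁻ z, erealPos (E z) ∂ν := by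
    have h1 : (∫⁻ x, erealPos (E (rτ x)) ∂μ) ≤ ∫⁻ x, ⨆ n, erealPos (M n x) ∂μ :=
      lintegral_mono fun x => le_trans (erealPos_mono (hMkey x)) (erealPos_le_iSup _)
    rw [lintegral_iSup (fun n => hposM n)
      (fun n m hnm x => erealPos_mono (Mfun_mono E D τ x hnm))] at h1
    exact le_trans h1 (iSup_le hA)
  have hB : (∫⁻ z, erealPos (-(E z)) ∂ν) ≤ ∫⁻ x, erealPos (-(E (rτ x))) ∂μ := by
    have hstep : ∀ k : ℕ, (∫⁻ z, min (erealPos (-(E z))) (k : ℝ≥0∞) ∂ν)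
        ≤ ∫⁻ x, erealPos (-(E (rτ x))) ∂μ := by
      intro k
      have h1 : ∀ n : ℕ, (∫⁻ z, min (erealPos (-(E z))) (k : ℝ≥0∞) ∂ν)
          ≤ ∫⁻ x, min (erealPos (-(M n x))) (k : ℝ≥0∞) ∂μ := by
        intro n
        obtain ⟨γ, hγ1, hγ2, hγd⟩ := hγ n
        rw [← hγ1, ← hγ2, lintegral_map ((hnegM n).min measurable_const) measurable_fst,
          lintegral_map (hnegE.min measurable_const) measurable_snd]
        refine lintegral_mono_ae ?_
        filter_upwards [hγd] with q hq
        exact min_le_min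
          (erealPos_mono (EReal.neg_le_neg_iff.mpr (hMle n q.1 q.2 hq))) le_rfl
      have h2 : (∫⁻ z, min (erealPos (-(E z))) (k : ℝ≥0∞) ∂ν)
          ≤ ⨅ n, ∫⁻ x, min (erealPos (-(M n x))) (k : ℝ≥0∞) ∂μ := le_iInf h1
      rw [← lintegral_iInf (fun n => (hnegM n).min measurable_const)
        (fun n m hnm x => min_le_min
          (erealPos_mono (EReal.neg_le_neg_iff.mpr (Mfun_mono E D τ x hnm))) le_rfl)
        (by
          refine ne_top_of_le_ne_top (ENNReal.natCast_ne_top k) ?_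
          calc (∫⁻ x, min (erealPos (-(M 0 x))) (k : ℝ≥0∞) ∂μ)
              ≤ ∫⁻ _, (k : ℝ≥0∞) ∂μ := lintegral_mono fun x => min_le_right _ _
            _ = (k : ℝ≥0∞) := by rw [lintegral_const, measure_univ, mul_one])] at h2
      refine le_trans h2 (lintegral_mono fun x => ?_)
      have h3 : (⨅ n, min (erealPos (-(M n x))) (k : ℝ≥0∞)) ≤ ⨅ n, erealPos (-(M n x)) :=
        le_iInf fun n => le_trans (iInf_le _ n) (min_le_left _ _)
      refine le_trans h3 (le_trans (iInf_erealPos_le _) (erealPos_mono ?_))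
      rw [← EReal.neg_iSup']
      exact EReal.neg_le_neg_iff.mpr (hMkey x)
    calc (∫⁻ z, erealPos (-(E z)) ∂ν)
        = ∫⁻ z, ⨆ k : ℕ, min (erealPos (-(E z))) (k : ℝ≥0∞) ∂ν :=
          lintegral_congr fun z => (iSup_min_natCast _).symm
      _ = ⨆ k : ℕ, ∫⁻ z, min (erealPos (-(E z))) (k : ℝ≥0∞) ∂ν :=
          lintegral_iSup (fun k => hnegE.min measurable_const)
            (fun k l hkl z => min_le_min le_rfl (by exact_mod_cast hkl))
      _ ≤ _ := iSup_le hstep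
  rw [potIntegral, potIntegral, lintegral_map hposE hrmeas, lintegral_map hnegE hrmeas]
  exact EReal.sub_le_sub (EReal.coe_ennreal_le_coe_ennreal_iff.mpr hAr)
    (EReal.coe_ennreal_le_coe_ennreal_iff.mpr hB)
end
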